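/- Suppose (a, b, c) is a triple of six times continuously differentiable functions from [0,L] to ℝ satisfying the coupled system: a' + a''' + φ1·φ1' − c1·φ2 + q·b = 0 on [0,L] with a(0) = a(L) = 0 and a'(L) = 0; b' + b''' + φ1·φ2' + φ1'·φ2 + c1·φ1 − √3·c1·φ2 − 2q·a + 2q·c = 0 on [0,L] with b(0) = b(L) = 0 and b'(L) = 0; and c' + c''' + φ2·φ2' + √3·c1·φ1 − q·b = 0 on [0,L] with c(0) = c(L) = 0 and c'(L) = 0. Define g₋ := φ1·φ1' − φ2·φ2' − √3·c1·φ1 − c1·φ2, g := φ1·φ2' + φ1'·φ2 + c1·φ1 − √3·c1·φ2, and f₋ := a − c. Then b = −(1/(2q))·(f₋' + f₋''' + g₋) on [0,L], and f₋ satisfies the sixth-order boundary value problem f₋⁽⁶⁾ + 2f₋⁽⁴⁾ + f₋'' + 4q²·f₋ + g₋' + g₋''' − 2q·g = 0 on [0,L], with f₋(0) = f₋(L) = f₋'(L) = f₋'''(L) = 0, f₋'(0) + f₋'''(0) = 0, and f₋''(L) + f₋⁽⁴⁾(L) = 0. -/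

import Mathlib

noncomputable def L : ℝ := 2 * Real.pi * Real.sqrt (7 / 3)

noncomputable def q : ℝ := 20 / (21 * Real.sqrt 21)

noncomputable def Θ : ℝ := (1 / Real.sqrt (14 * Real.pi)) * (3 / 7 : ℝ) ^ ((1 : ℝ) / 4)

noncomputable def φ1 (x : ℝ) : ℝ :=
  Θ * (Real.cos (5 * x / Real.sqrt 21) - 3 * Real.cos (x / Real.sqrt 21)
      + 2 * Real.cos (4 * x / Real.sqrt 21))

noncomputable def φ2 (x : ℝ) : ℝ :=
  Θ * (-Real.sin (5 * x / Real.sqrt 21) - 3 * Real.sin (x / Real.sqrt 21)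
      + 2 * Real.sin (4 * x / Real.sqrt 21))


noncomputable def c1 : ℝ :=
  (177147 / (392392 * Real.pi)) * Real.sqrt (1 / (2 * Real.pi)) * (3 / 7 : ℝ) ^ ((1 : ℝ) / 4)

/-- g₋ := φ1·φ1' − φ2·φ2' − √3·c1·φ1 − c1·φ2. -/
noncomputable def gminus (x : ℝ) : ℝ :=
  φ1 x * deriv φ1 x - φ2 x * deriv φ2 x - Real.sqrt 3 * c1 * φ1 x - c1 * φ2 x

/-- g := φ1·φ2' + φ1'·φ2 + c1·φ1 − √3·c1·φ2. -/
noncomputable def gfun (x : ℝ) : ℝ :=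
  φ1 x * deriv φ2 x + deriv φ1 x * φ2 x + c1 * φ1 x - Real.sqrt 3 * c1 * φ2 x

/-!
Subtracting the equation for `c` from the one for `a` eliminates everything except
`f₋' + f₋''' + g₋ + 2q·b = 0`. Differentiating this identity once and three times and adding
the results produces `2q·(b' + b''')`, which the equation for `b` replaces by
`2q·(2q·f₋ − g)`. The boundary conditions follow by evaluating the identity and its first
derivative at the endpoints: `φ1` and `φ2` vanish at `0` and `L`, and so do their derivatives at
`L`, because `L/√21 = 2π/3` makes `4x/√21 ≡ x/√21` and `5x/√21 ≡ -x/√21` modulo `2π` at `x = L`.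
-/

open Real

section LinearKdV

variable {𝕜 F : Type*} [NontriviallyNormedField 𝕜] [NormedAddCommGroup F] [NormedSpace 𝕜 F]
  {s : Set 𝕜}

theorem hasDerivWithinAt_iteratedDerivWithin {f : 𝕜 → F} {n k : ℕ} (hf : ContDiffOn 𝕜 n f s)
    (hs : UniqueDiffOn 𝕜 s) (hk : k < n) {x : 𝕜} (hx : x ∈ s) :
    HasDerivWithinAt (iteratedDerivWithin k f s) (iteratedDerivWithin (k + 1) f s x) s x := by
  rw [iteratedDerivWithin_succ]
  exact (hf.differentiableOn_iteratedDerivWithin (by exact_mod_cast hk) hs x hx).hasDerivWithinAt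

theorem HasDerivWithinAt.eq_zero_of_eqOn_zero {g : 𝕜 → F} {g' : F} {x : 𝕜}
    (h : HasDerivWithinAt g g' s x) (hs : UniqueDiffWithinAt 𝕜 s x) (hg : Set.EqOn g 0 s)
    (hx : x ∈ s) : g' = 0 :=
  hs.eq_deriv s h ((hasDerivWithinAt_const x s 0).congr hg (hg hx))

theorem iteratedDerivWithin_linearKdV_eq_zero (hs : UniqueDiffOn 𝕜 s) {f b w : 𝕜 → 𝕜} {κ : 𝕜}
    {j : ℕ} (hf : ContDiffOn 𝕜 (j + 3) f s) (hb : ContDiffOn 𝕜 j b s) (hw : ContDiff 𝕜 j w)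
    (H : ∀ x ∈ s,
      iteratedDerivWithin 1 f s x + iteratedDerivWithin 3 f s x + w x + κ * b x = 0) :
    ∀ x ∈ s, iteratedDerivWithin (j + 1) f s x + iteratedDerivWithin (j + 3) f s x
      + iteratedDeriv j w x + κ * iteratedDerivWithin j b s x = 0 := by
  induction j with
  | zero => simpa using H
  | succ j ih =>
    intro x hx
    have hf' : ContDiffOn 𝕜 (j + 4 : ℕ) f s := by exact_mod_cast hf
    have hb' : ContDiffOn 𝕜 (j + 1 : ℕ) b s := by exact_mod_cast hb
    have hw' : ContDiff 𝕜 (j + 1 : ℕ) w := by exact_mod_cast hw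
    have hw_deriv : HasDerivWithinAt (iteratedDeriv j w) (iteratedDeriv (j + 1) w x) s x := by
      rw [iteratedDeriv_succ]
      exact (hw'.differentiable_iteratedDeriv j (by exact_mod_cast j.lt_succ_self) x
        ).hasDerivAt.hasDerivWithinAt
    have h_deriv :=
      (((hasDerivWithinAt_iteratedDerivWithin hf' hs (k := j + 1) (by omega) hx).add
        (hasDerivWithinAt_iteratedDerivWithin hf' hs (k := j + 3) (by omega) hx)).add
        hw_deriv).add ((hasDerivWithinAt_iteratedDerivWithin hb' hs j.lt_succ_self hx).const_mul κ)
    exact h_deriv.eq_zero_of_eqOn_zero (hs x hx) (ih (hf.of_le (by norm_cast; omega))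
      (hb.of_le (by norm_cast; omega)) (hw.of_le (by norm_cast; omega))) hx

end LinearKdV

theorem hasDerivAt_mul_div (k c x : ℝ) : HasDerivAt (fun y => k * y / c) (k / c) x := by
  simpa using ((hasDerivAt_id x).const_mul k).div_const c

theorem hasDerivAt_φ1 (x : ℝ) : HasDerivAt φ1
    (Θ / √21 * (-5 * sin (5 * x / √21) + 3 * sin (x / √21) - 8 * sin (4 * x / √21))) x := by
  have h (k : ℝ) := hasDerivAt_mul_div k (√21) x
  have h1 : HasDerivAt (fun y => y / √21) (1 / √21) x := (hasDerivAt_id x).div_const (√21)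
  exact ((((h 5).cos.sub (h1.cos.const_mul 3)).add ((h 4).cos.const_mul 2)).const_mul Θ
    ).congr_deriv (by ring)

theorem hasDerivAt_φ2 (x : ℝ) : HasDerivAt φ2
    (Θ / √21 * (-5 * cos (5 * x / √21) - 3 * cos (x / √21) + 8 * cos (4 * x / √21))) x := by
  have h (k : ℝ) := hasDerivAt_mul_div k (√21) x
  have h1 : HasDerivAt (fun y => y / √21) (1 / √21) x := (hasDerivAt_id x).div_const (√21)
  exact ((((h 5).sin.neg.sub (h1.sin.const_mul 3)).add ((h 4).sin.const_mul 2)).const_mul Θ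
    ).congr_deriv (by ring)

theorem contDiff_φ1 : ContDiff ℝ ⊤ φ1 := by unfold φ1; fun_prop

theorem contDiff_φ2 : ContDiff ℝ ⊤ φ2 := by unfold φ2; fun_prop

theorem contDiff_gminus : ContDiff ℝ ⊤ gminus := by unfold gminus φ1 φ2; fun_prop

theorem L_pos : 0 < L := by unfold L; positivity

theorem q_pos : 0 < q := by unfold q; positivity

theorem L_div_sqrt_21 : L / √21 = 2 * π / 3 := by
  have h : √21 = 3 * √(7 / 3) := by
    rw [show (21 : ℝ) = 3 ^ 2 * (7 / 3) by norm_num, sqrt_mul (by norm_num),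
      sqrt_sq (by norm_num)]
  have : √(7 / 3) ≠ 0 := by positivity
  rw [h, L]
  field_simp

theorem five_mul_L_div_sqrt_21 : 5 * L / √21 = -(L / √21) + 2 * π + 2 * π := by
  rw [mul_div_assoc, L_div_sqrt_21]; ring

theorem four_mul_L_div_sqrt_21 : 4 * L / √21 = L / √21 + 2 * π := by
  rw [mul_div_assoc, L_div_sqrt_21]; ring

theorem φ1_zero : φ1 0 = 0 := by norm_num [φ1]

theorem φ2_zero : φ2 0 = 0 := by norm_num [φ2]

theorem φ1_L : φ1 L = 0 := by
  simp only [φ1, five_mul_L_div_sqrt_21, four_mul_L_div_sqrt_21, cos_add_two_pi, cos_neg]; ring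

theorem φ2_L : φ2 L = 0 := by
  simp only [φ2, five_mul_L_div_sqrt_21, four_mul_L_div_sqrt_21, sin_add_two_pi, sin_neg]; ring

theorem deriv_φ1_L : deriv φ1 L = 0 := by
  simp only [(hasDerivAt_φ1 L).deriv, five_mul_L_div_sqrt_21, four_mul_L_div_sqrt_21,
    sin_add_two_pi, sin_neg]
  ring

theorem deriv_φ2_L : deriv φ2 L = 0 := by
  simp only [(hasDerivAt_φ2 L).deriv, five_mul_L_div_sqrt_21, four_mul_L_div_sqrt_21,
    cos_add_two_pi, cos_neg]
  ring

theorem gminus_zero : gminus 0 = 0 := by simp [gminus, φ1_zero, φ2_zero]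

theorem gminus_L : gminus L = 0 := by simp [gminus, φ1_L, φ2_L]

theorem deriv_gminus_L : deriv gminus L = 0 := by
  have hφ1 := contDiff_φ1.differentiable (by simp) L
  have hφ2 := contDiff_φ2.differentiable (by simp) L
  have hφ1' := (contDiff_φ1.of_le le_top).differentiable_deriv_two L
  have hφ2' := (contDiff_φ2.of_le le_top).differentiable_deriv_two L
  have H : HasDerivAt gminus (deriv φ1 L * deriv φ1 L + φ1 L * deriv (deriv φ1) L
      - (deriv φ2 L * deriv φ2 L + φ2 L * deriv (deriv φ2) L)
      - √3 * c1 * deriv φ1 L - c1 * deriv φ2 L) L :=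
    (((hφ1.hasDerivAt.mul hφ1'.hasDerivAt).sub (hφ2.hasDerivAt.mul hφ2'.hasDerivAt)).sub
      (hφ1.hasDerivAt.const_mul _)).sub (hφ2.hasDerivAt.const_mul _)
  simp [H.deriv, φ1_L, φ2_L, deriv_φ1_L, deriv_φ2_L]

/-- any C⁶ solution (a,b,c) of the coupled system yields
b = −(1/(2q))·(f₋' + f₋''' + g₋) with f₋ := a − c, and f₋ solves the stated
sixth-order boundary value problem. -/
theorem stmt_15 (a b c : ℝ → ℝ)
    (ha : ContDiffOn ℝ 6 a (Set.Icc 0 L))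
    (hb : ContDiffOn ℝ 6 b (Set.Icc 0 L))
    (hc : ContDiffOn ℝ 6 c (Set.Icc 0 L))
    (hodea : ∀ x ∈ Set.Icc (0 : ℝ) L,
      iteratedDerivWithin 1 a (Set.Icc 0 L) x + iteratedDerivWithin 3 a (Set.Icc 0 L) x
        + φ1 x * deriv φ1 x - c1 * φ2 x + q * b x = 0)
    (ha0 : a 0 = 0) (haL : a L = 0) (haL' : iteratedDerivWithin 1 a (Set.Icc 0 L) L = 0)
    (hodeb : ∀ x ∈ Set.Icc (0 : ℝ) L,
      iteratedDerivWithin 1 b (Set.Icc 0 L) x + iteratedDerivWithin 3 b (Set.Icc 0 L) x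
        + φ1 x * deriv φ2 x + deriv φ1 x * φ2 x + c1 * φ1 x - Real.sqrt 3 * c1 * φ2 x
        - 2 * q * a x + 2 * q * c x = 0)
    (hb0 : b 0 = 0) (hbL : b L = 0) (hbL' : iteratedDerivWithin 1 b (Set.Icc 0 L) L = 0)
    (hodec : ∀ x ∈ Set.Icc (0 : ℝ) L,
      iteratedDerivWithin 1 c (Set.Icc 0 L) x + iteratedDerivWithin 3 c (Set.Icc 0 L) x
        + φ2 x * deriv φ2 x + Real.sqrt 3 * c1 * φ1 x - q * b x = 0)
    (hc0 : c 0 = 0) (hcL : c L = 0) (hcL' : iteratedDerivWithin 1 c (Set.Icc 0 L) L = 0) :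
    (∀ x ∈ Set.Icc (0 : ℝ) L,
      b x = -(1 / (2 * q)) *
        (iteratedDerivWithin 1 (fun ξ => a ξ - c ξ) (Set.Icc 0 L) x
          + iteratedDerivWithin 3 (fun ξ => a ξ - c ξ) (Set.Icc 0 L) x + gminus x)) ∧
    (∀ x ∈ Set.Icc (0 : ℝ) L,
      iteratedDerivWithin 6 (fun ξ => a ξ - c ξ) (Set.Icc 0 L) x
        + 2 * iteratedDerivWithin 4 (fun ξ => a ξ - c ξ) (Set.Icc 0 L) x
        + iteratedDerivWithin 2 (fun ξ => a ξ - c ξ) (Set.Icc 0 L) x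
        + 4 * q ^ 2 * (a x - c x)
        + deriv gminus x + iteratedDeriv 3 gminus x - 2 * q * gfun x = 0) ∧
    a 0 - c 0 = 0 ∧ a L - c L = 0 ∧
    iteratedDerivWithin 1 (fun ξ => a ξ - c ξ) (Set.Icc 0 L) L = 0 ∧
    iteratedDerivWithin 3 (fun ξ => a ξ - c ξ) (Set.Icc 0 L) L = 0 ∧
    iteratedDerivWithin 1 (fun ξ => a ξ - c ξ) (Set.Icc 0 L) 0
      + iteratedDerivWithin 3 (fun ξ => a ξ - c ξ) (Set.Icc 0 L) 0 = 0 ∧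
    iteratedDerivWithin 2 (fun ξ => a ξ - c ξ) (Set.Icc 0 L) L
      + iteratedDerivWithin 4 (fun ξ => a ξ - c ξ) (Set.Icc 0 L) L = 0 := by
  have hs : UniqueDiffOn ℝ (Set.Icc 0 L) := uniqueDiffOn_Icc L_pos
  have mem0 : (0 : ℝ) ∈ Set.Icc 0 L := Set.left_mem_Icc.2 L_pos.le
  have memL : L ∈ Set.Icc 0 L := Set.right_mem_Icc.2 L_pos.le
  have hf : ContDiffOn ℝ 6 (fun ξ => a ξ - c ξ) (Set.Icc 0 L) := ha.sub hc
  have hsub (k : ℕ) (hk : k ≤ 6) {x : ℝ} (hx : x ∈ Set.Icc 0 L) :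
      iteratedDerivWithin k (fun ξ => a ξ - c ξ) (Set.Icc 0 L) x
        = iteratedDerivWithin k a (Set.Icc 0 L) x - iteratedDerivWithin k c (Set.Icc 0 L) x :=
    iteratedDerivWithin_sub hx hs ((ha.of_le (by exact_mod_cast hk)) x hx)
      ((hc.of_le (by exact_mod_cast hk)) x hx)
  have hkdv : ∀ x ∈ Set.Icc 0 L,
      iteratedDerivWithin 1 (fun ξ => a ξ - c ξ) (Set.Icc 0 L) x
        + iteratedDerivWithin 3 (fun ξ => a ξ - c ξ) (Set.Icc 0 L) x
        + gminus x + 2 * q * b x = 0 := by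
    intro x hx
    rw [hsub 1 (by norm_num) hx, hsub 3 (by norm_num) hx, gminus]
    linear_combination hodea x hx - hodec x hx
  have hkdv₁ := iteratedDerivWithin_linearKdV_eq_zero hs (j := 1)
    (hf.of_le (by norm_num)) (hb.of_le (by norm_num)) (contDiff_gminus.of_le le_top) hkdv
  have hkdv₃ := iteratedDerivWithin_linearKdV_eq_zero hs (j := 3)
    (hf.of_le (by norm_num)) (hb.of_le (by norm_num)) (contDiff_gminus.of_le le_top) hkdv
  simp only [Nat.reduceAdd, iteratedDeriv_one] at hkdv₁ hkdv₃
  have hf'L : iteratedDerivWithin 1 (fun ξ => a ξ - c ξ) (Set.Icc 0 L) L = 0 := by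
    rw [hsub 1 (by norm_num) memL, haL', hcL', sub_self]
  refine ⟨fun x hx => ?_, fun x hx => ?_, by rw [ha0, hc0, sub_self],
    by rw [haL, hcL, sub_self], hf'L, ?_, ?_, ?_⟩
  · field_simp [q_pos.ne']
    linear_combination hkdv x hx
  · rw [gfun]
    linear_combination hkdv₁ x hx + hkdv₃ x hx - 2 * q * hodeb x hx
  · linear_combination hkdv L memL - hf'L - gminus_L - 2 * q * hbL
  · linear_combination hkdv 0 mem0 - gminus_zero - 2 * q * hb0
  · linear_combination hkdv₁ L memL - deriv_gminus_L - 2 * q * hbL'
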